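/- arXiv:1607.08258 — 6 statements merged into one kernel-verified Lean document; each statement's English description precedes it below -/
import Mathlib

section
/- For any simple graph G on n vertices, √(s⁺(G)) + √(s⁺(complement of G)) ≥ n − 1. -/
open Finset SimpleGraph

/-- The adjacency matrix of a simple graph (over `ℝ`) is Hermitian. -/
theorem adjHerm {V : Type*} [Fintype V] [DecidableEq V] (G : SimpleGraph V)
    [DecidableRel G.Adj] : (G.adjMatrix ℝ).IsHermitian :=
  by rw [Matrix.IsHermitian, Matrix.conjTranspose_eq_transpose_of_trivial]; exact isSymm_adjMatrix G

open scoped Classical in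
/-- The eigenvalues of the adjacency matrix of `G`. -/
noncomputable def adjEig {V : Type*} [Fintype V] [DecidableEq V] (G : SimpleGraph V) : V → ℝ :=
  (adjHerm G).eigenvalues

/-- `s⁺(G)`: the sum of the squares of the positive adjacency eigenvalues. -/
noncomputable def sPos {V : Type*} [Fintype V] [DecidableEq V] (G : SimpleGraph V) : ℝ :=
  ∑ i, if 0 < adjEig G i then (adjEig G i) ^ 2 else 0

/-- `s⁻(G)`: the sum of the squares of the negative adjacency eigenvalues. -/
noncomputable def sNeg {V : Type*} [Fintype V] [DecidableEq V] (G : SimpleGraph V) : ℝ :=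
  ∑ i, if adjEig G i < 0 then (adjEig G i) ^ 2 else 0

/-- The spectral radius (largest adjacency eigenvalue) of `G`. -/
noncomputable def specRad {V : Type*} [Fintype V] [DecidableEq V] (G : SimpleGraph V) : ℝ :=
  ⨆ i, adjEig G i

open scoped Classical in
/-- The number of edges of `G`. -/
noncomputable def numEdges {V : Type*} [Fintype V] (G : SimpleGraph V) : ℕ :=
  G.edgeFinset.card

open scoped Classical in
/-- The Randić index `R(G) = ∑_{ij ∈ E} 1/√(dᵢ·dⱼ)`, written as half the sum
over ordered adjacent pairs. -/
noncomputable def randic {V : Type*} [Fintype V] (G : SimpleGraph V) : ℝ :=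
  (1 / 2) * ∑ i, ∑ j,
    if G.Adj i j then 1 / Real.sqrt ((G.degree i : ℝ) * (G.degree j : ℝ)) else 0

/-!
For a real symmetric matrix `A` and any vector `x`, writing `x = Σ cᵢ uᵢ` in an orthonormal
eigenbasis gives `xᵀAx = Σ λᵢ cᵢ² ≤ Σ λᵢ⁺ cᵢ² ≤ √(Σ (λᵢ⁺)²) · √(Σ cᵢ⁴) ≤ √(s⁺(A)) · ‖x‖²`
by Cauchy–Schwarz. For the all-ones vector and `A` the adjacency matrix of `G` this reads
`Σ_v deg v ≤ n · √(s⁺(G))`. Adding this to the same bound for `Ḡ`, and using that the degrees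
of `v` in `G` and `Ḡ` add up to `n - 1`, yields `n (n - 1) ≤ n (√(s⁺(G)) + √(s⁺(Ḡ)))`.
-/

open Matrix

theorem Matrix.dotProduct_star_mulVec_self_of_mem_unitaryGroup {m R : Type*} [Fintype m]
    [DecidableEq m] [CommRing R] [StarRing R] [TrivialStar R] {U : Matrix m m R}
    (hU : U ∈ unitaryGroup m R) (x : m → R) :
    (star U *ᵥ x) ⬝ᵥ (star U *ᵥ x) = x ⬝ᵥ x := by
  have hstar : star U = Uᵀ := conjTranspose_eq_transpose_of_trivial U
  rw [dotProduct_mulVec, hstar, vecMul_transpose, mulVec_mulVec, ← hstar,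
    mem_unitaryGroup_iff.mp hU, one_mulVec]

theorem Finset.sum_mul_sq_le_sqrt_sum_posPart_sq_mul_sum_sq {ι : Type*} (s : Finset ι)
    (μ c : ι → ℝ) :
    ∑ i ∈ s, μ i * c i ^ 2 ≤ √(∑ i ∈ s, (μ i)⁺ ^ 2) * ∑ i ∈ s, c i ^ 2 :=
  calc ∑ i ∈ s, μ i * c i ^ 2
      ≤ ∑ i ∈ s, (μ i)⁺ * c i ^ 2 :=
        sum_le_sum fun i _ => mul_le_mul_of_nonneg_right (le_posPart _) (sq_nonneg _)
    _ ≤ √(∑ i ∈ s, (μ i)⁺ ^ 2) * √(∑ i ∈ s, (c i ^ 2) ^ 2) :=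
        Real.sum_mul_le_sqrt_mul_sqrt _ _ _
    _ ≤ √(∑ i ∈ s, (μ i)⁺ ^ 2) * ∑ i ∈ s, c i ^ 2 := by
        gcongr
        rw [Real.sqrt_le_iff]
        exact ⟨by positivity, sum_sq_le_sq_sum_of_nonneg fun i _ => sq_nonneg _⟩

theorem Matrix.IsHermitian.dotProduct_mulVec_eq_sum_eigenvalues_mul_sq {m : Type*} [Fintype m]
    [DecidableEq m] {A : Matrix m m ℝ} (hA : A.IsHermitian) (x : m → ℝ) :
    x ⬝ᵥ (A *ᵥ x) =
      ∑ i, hA.eigenvalues i * (star (hA.eigenvectorUnitary : Matrix m m ℝ) *ᵥ x) i ^ 2 := by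
  set U : Matrix m m ℝ := ↑hA.eigenvectorUnitary
  have hxU : x ᵥ* U = star U *ᵥ x := by
    rw [show star U = Uᵀ from conjTranspose_eq_transpose_of_trivial U, mulVec_transpose]
  conv_lhs => rw [hA.spectral_theorem, Unitary.conjStarAlgAut_apply]
  rw [← mulVec_mulVec, ← mulVec_mulVec, dotProduct_mulVec x U, hxU]
  simp only [dotProduct, mulVec_diagonal, Function.comp_apply, RCLike.ofReal_real_eq_id, id]
  exact sum_congr rfl fun i _ => by ring

theorem Matrix.IsHermitian.dotProduct_mulVec_le_sqrt_sum_posPart_sq_mul {m : Type*} [Fintype m]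
    [DecidableEq m] {A : Matrix m m ℝ} (hA : A.IsHermitian) (x : m → ℝ) :
    x ⬝ᵥ (A *ᵥ x) ≤ √(∑ i, (hA.eigenvalues i)⁺ ^ 2) * (x ⬝ᵥ x) := by
  rw [hA.dotProduct_mulVec_eq_sum_eigenvalues_mul_sq,
    ← dotProduct_star_mulVec_self_of_mem_unitaryGroup hA.eigenvectorUnitary.2 x]
  simpa only [dotProduct, ← sq] using Finset.sum_mul_sq_le_sqrt_sum_posPart_sq_mul_sum_sq _ _ _

namespace SimpleGraph

variable {V : Type*} [Fintype V] [DecidableEq V] (G : SimpleGraph V)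

theorem adjEig_eq_eigenvalues [DecidableRel G.Adj] : adjEig G = (adjHerm G).eigenvalues := by
  obtain rfl : (fun a b => Classical.propDecidable (G.Adj a b) : DecidableRel G.Adj) =
      ‹DecidableRel G.Adj› := Subsingleton.elim _ _
  rfl

theorem sPos_eq_sum_posPart_sq : sPos G = ∑ i, (adjEig G i)⁺ ^ 2 := by
  refine sum_congr rfl fun i _ => ?_
  split_ifs with h
  · rw [posPart_eq_self.mpr h.le]
  · rw [posPart_eq_zero.mpr (not_lt.mp h), zero_pow two_ne_zero]

theorem sum_degree_le_sqrt_sPos_mul_card [DecidableRel G.Adj] :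
    ∑ v, (G.degree v : ℝ) ≤ √(sPos G) * Fintype.card V := by
  have h := (adjHerm G).dotProduct_mulVec_le_sqrt_sum_posPart_sq_mul (fun _ => 1)
  simpa [dotProduct, adjMatrix_mulVec_const_apply, sPos_eq_sum_posPart_sq,
    adjEig_eq_eigenvalues] using h

theorem degree_add_degree_compl [DecidableRel G.Adj] (v : V) :
    G.degree v + Gᶜ.degree v = Fintype.card V - 1 := by
  have := G.degree_lt_card_verts v
  rw [degree_compl]
  omega

theorem sum_degree_add_sum_degree_compl [DecidableRel G.Adj] :
    ∑ v, (G.degree v : ℝ) + ∑ v, (Gᶜ.degree v : ℝ) = Fintype.card V * (Fintype.card V - 1) := by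
  rw [← Finset.sum_add_distrib, ← Finset.card_univ, ← nsmul_eq_mul, ← Finset.sum_const]
  refine sum_congr rfl fun v _ => ?_
  have hcard : 1 ≤ Fintype.card V := Fintype.card_pos_iff.mpr ⟨v⟩
  rw [← Nat.cast_add, degree_add_degree_compl, Nat.cast_sub hcard, Nat.cast_one, Finset.card_univ]

end SimpleGraph

/-- `√(s⁺(G)) + √(s⁺(Ḡ)) ≥ n - 1`. -/
theorem sqrt_sPos_add_sqrt_sPos_compl_ge {n : ℕ} (G : SimpleGraph (Fin n)) :
    Real.sqrt (sPos G) + Real.sqrt (sPos Gᶜ) ≥ (n : ℝ) - 1 := by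
  classical
  rcases n.eq_zero_or_pos with rfl | hn
  · simp only [CharP.cast_eq_zero, zero_sub, ge_iff_le]
    linarith [Real.sqrt_nonneg (sPos G), Real.sqrt_nonneg (sPos Gᶜ)]
  refine le_of_mul_le_mul_right ?_ (Nat.cast_pos.mpr hn : (0 : ℝ) < n)
  calc ((n : ℝ) - 1) * n = ∑ v, (G.degree v : ℝ) + ∑ v, (Gᶜ.degree v : ℝ) := by
        rw [G.sum_degree_add_sum_degree_compl, Fintype.card_fin, mul_comm]
    _ ≤ √(sPos G) * n + √(sPos Gᶜ) * n := by
        simpa only [Fintype.card_fin] using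
          add_le_add G.sum_degree_le_sqrt_sPos_mul_card Gᶜ.sum_degree_le_sqrt_sPos_mul_card
    _ = (√(sPos G) + √(sPos Gᶜ)) * n := by ring
end

section
/- If G is a simple graph with m edges and chromatic number χ, then s⁺(G) ≤ 2m(χ − 1)/χ. -/
open Finset SimpleGraph

/-!
Write `A = A⁺ - A⁻` with `A⁺, A⁻` positive semidefinite and `A⁺ A⁻ = 0`; then `‖A⁺‖² = s⁺`,
`‖A⁻‖² = s⁻` (Frobenius norms) and `s⁺ + s⁻ = ‖A‖² = 2m`. A proper `k`-colouring makes `A` vanish on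
pairs of equal colour, so `A⁺` and `A⁻` agree there; call `T` the common value of their squared
mass on such pairs, and `X`, `Y` their squared masses on the remaining pairs. Orthogonality
`⟪A⁺, A⁻⟫ = 0` and Cauchy–Schwarz give `T² ≤ X Y`, while the Schur square `A⁺ ∘ A⁺` is positive
semidefinite, and for such `M` the all-ones quadratic form is at most `k` times the sum of those of
the colour classes: `T + X ≤ k T`. Together, `s⁺ ≤ (k - 1) s⁻`, i.e. `k s⁺ ≤ (k - 1) 2m`.
-/

open scoped MatrixOrder

namespace Matrix

variable {V : Type*} [Fintype V]

theorem IsSymm.sum_mul_apply_eq_trace_mul {R : Type*} [CommSemiring R] {S T : Matrix V V R}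
    (hT : T.IsSymm) : ∑ u, ∑ v, S u v * T u v = (S * T).trace := by
  simp only [trace, diag_apply, mul_apply, hT.apply]

section sameFiber

variable {ι : Type*} [Fintype ι] [DecidableEq ι]

theorem PosSemidef.sum_apply_le_card_mul_sum_apply_sameFiber {M : Matrix V V ℝ}
    (hM : M.PosSemidef) (c : V → ι) :
    ∑ u, ∑ v, M u v ≤ (Fintype.card ι : ℝ) * ∑ u, ∑ v, if c u = c v then M u v else 0 := by
  set k : ℝ := (Fintype.card ι : ℝ)
  rcases isEmpty_or_nonempty V with hV | hV
  · simp
  have hk : 0 < k := by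
    have : Nonempty ι := hV.map c
    exact Nat.cast_pos.mpr Fintype.card_pos
  -- `∑ d, w d (w d)ᵀ = k • (k • S - J)`, with `S` the indicator of `c u = c v` and `J` all ones
  let w : ι → V → ℝ := fun d u => k * (if c u = d then 1 else 0) - 1
  have hw : ∀ u v, ∑ d, w d u * w d v = k * (k * (if c u = c v then 1 else 0) - 1) := by
    intro u v
    simp only [w, sub_mul, mul_sub, mul_ite, ite_mul, mul_one, mul_zero, zero_mul, one_mul,
      sum_sub_distrib, sum_ite_eq, mem_univ, if_true, sum_const, card_univ, nsmul_eq_mul]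
    split_ifs <;> ring
  have hq : 0 ≤ ∑ d, w d ⬝ᵥ M *ᵥ w d :=
    sum_nonneg fun d _ => by simpa using hM.dotProduct_mulVec_nonneg (w d)
  have hq' : ∑ d, w d ⬝ᵥ M *ᵥ w d = k * (k * ∑ u, ∑ v, (if c u = c v then M u v else 0)
      - ∑ u, ∑ v, M u v) := by
    simp only [dotProduct, mulVec, mul_sum]
    rw [sum_comm]
    simp only [mul_sub, mul_sum, ← sum_sub_distrib]
    refine sum_congr rfl fun u _ => ?_
    rw [sum_comm]
    refine sum_congr rfl fun v _ => ?_
    rw [show ∑ d, w d u * (M u v * w d v) = M u v * ∑ d, w d u * w d v by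
      rw [mul_sum]; exact sum_congr rfl fun _ _ => by ring, hw]
    split_ifs <;> ring
  rw [hq'] at hq
  nlinarith [mul_nonneg_iff_of_pos_left hk |>.mp hq]

theorem PosSemidef.sum_sq_apply_le_of_eq_on_sameFiber {B C : Matrix V V ℝ} (hB : B.PosSemidef)
    (c : V → ι) (hsame : ∀ u v, c u = c v → B u v = C u v)
    (horth : ∑ u, ∑ v, B u v * C u v = 0) :
    ∑ u, ∑ v, B u v ^ 2 ≤ (Fintype.card ι - 1) * ∑ u, ∑ v, C u v ^ 2 := by
  rcases isEmpty_or_nonempty V with hV | hV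
  · simp
  have hk : (1 : ℝ) ≤ Fintype.card ι := by
    have : Nonempty ι := hV.map c
    exact Nat.one_le_cast.mpr Fintype.card_pos
  classical
  set S := univ.filter fun p : V × V => c p.1 = c p.2
  have hsplit (f : V → V → ℝ) :
      ∑ u, ∑ v, f u v = ∑ p ∈ S, f p.1 p.2 + ∑ p ∈ Sᶜ, f p.1 p.2 := by
    rw [sum_add_sum_compl, Fintype.sum_prod_type']
  have hsame_sum (f : V → V → ℝ) :
      ∑ u, ∑ v, (if c u = c v then f u v else 0) = ∑ p ∈ S, f p.1 p.2 := by
    rw [sum_filter]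
    exact (Fintype.sum_prod_type' fun u v => if c u = c v then f u v else 0).symm
  set T := ∑ p ∈ S, B p.1 p.2 ^ 2
  set X := ∑ p ∈ Sᶜ, B p.1 p.2 ^ 2
  set Y := ∑ p ∈ Sᶜ, C p.1 p.2 ^ 2
  have hC : ∑ p ∈ S, C p.1 p.2 ^ 2 = T :=
    sum_congr rfl fun p hp => by rw [hsame _ _ (mem_filter.mp hp).2]
  have hBC : ∑ p ∈ S, B p.1 p.2 * C p.1 p.2 = T :=
    sum_congr rfl fun p hp => by rw [hsame _ _ (mem_filter.mp hp).2, sq]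
  have hkey : T + X ≤ Fintype.card ι * T := by
    have := (hB.hadamard hB).sum_apply_le_card_mul_sum_apply_sameFiber c
    simp only [hadamard_apply, ← sq] at this
    rwa [hsame_sum, hsplit] at this
  have hcross : ∑ p ∈ Sᶜ, B p.1 p.2 * C p.1 p.2 = -T := by
    rw [hsplit, hBC] at horth
    linarith
  have hcs : T ^ 2 ≤ X * Y := by
    simpa [hcross] using sum_mul_sq_le_sq_mul_sq Sᶜ (fun p => B p.1 p.2) (fun p => C p.1 p.2)
  have hY : 0 ≤ Y := sum_nonneg fun _ _ => sq_nonneg _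
  have hT : 0 ≤ T := sum_nonneg fun _ _ => sq_nonneg _
  have hTY : T ≤ (Fintype.card ι - 1) * Y := by
    rcases hT.eq_or_lt with hT0 | hT0
    · rw [← hT0]; exact mul_nonneg (by linarith) hY
    · refine le_of_mul_le_mul_left ?_ hT0
      nlinarith [mul_le_mul_of_nonneg_right (show X ≤ (Fintype.card ι - 1) * T by linarith) hY]
  rw [hsplit, hsplit, hC]
  nlinarith

end sameFiber

variable [DecidableEq V] {A : Matrix V V ℝ}

theorem IsHermitian.trace_cfc (hA : A.IsHermitian) (f : ℝ → ℝ) :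
    (cfc f A).trace = ∑ i, f (hA.eigenvalues i) := by
  rw [hA.cfc_eq, IsHermitian.cfc, Unitary.conjStarAlgAut_apply, trace_mul_cycle,
    Unitary.coe_star_mul_self, one_mul, trace_diagonal]
  simp

theorem IsHermitian.sum_sq_posPart_apply (hA : A.IsHermitian) :
    ∑ u, ∑ v, A⁺ u v ^ 2 = ∑ i, (hA.eigenvalues i)⁺ ^ 2 := by
  have hcfc : A⁺ = cfc (fun x : ℝ => x⁺) A := by
    rw [CFC.posPart_def, cfcₙ_eq_cfc]
  have hsymm : (A⁺).IsSymm := isHermitian_iff_isSymm.mp (CFC.posPart_nonneg A).isSelfAdjoint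
  simp only [sq, hsymm.sum_mul_apply_eq_trace_mul]
  rw [hcfc, ← cfc_mul .., hA.trace_cfc]

theorem sum_posPart_mul_negPart_apply (A : Matrix V V ℝ) :
    ∑ u, ∑ v, A⁺ u v * A⁻ u v = 0 := by
  rw [(isHermitian_iff_isSymm.mp (CFC.negPart_nonneg A).isSelfAdjoint).sum_mul_apply_eq_trace_mul,
    CFC.posPart_mul_negPart, trace_zero]

theorem IsHermitian.sum_sq_posPart_apply_add_sum_sq_negPart_apply (hA : A.IsHermitian) :
    ∑ u, ∑ v, A⁺ u v ^ 2 + ∑ u, ∑ v, A⁻ u v ^ 2 = ∑ u, ∑ v, A u v ^ 2 := by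
  conv_rhs => rw [← CFC.posPart_sub_negPart A hA.isSelfAdjoint]
  have h := sum_posPart_mul_negPart_apply A
  simp only [sub_apply, sub_sq, sum_add_distrib, sum_sub_distrib, mul_assoc, ← mul_sum] at h ⊢
  rw [h]
  ring

end Matrix

namespace SimpleGraph

variable {V : Type*} [Fintype V]

theorem sum_sq_adjMatrix_apply (G : SimpleGraph V) [DecidableRel G.Adj] :
    ∑ u, ∑ v, G.adjMatrix ℝ u v ^ 2 = 2 * #G.edgeFinset := by
  simp only [sq, (isSymm_adjMatrix G).sum_mul_apply_eq_trace_mul, Matrix.trace, Matrix.diag_apply,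
    adjMatrix_mul_self_apply_self]
  exact_mod_cast sum_degrees_eq_twice_card_edges G

variable [DecidableEq V]

theorem sPos_eq_sum_sq_posPart (G : SimpleGraph V) : sPos G = ∑ i, (adjEig G i)⁺ ^ 2 := by
  refine sum_congr rfl fun i _ => ?_
  split_ifs with h
  · rw [posPart_eq_self.mpr h.le]
  · rw [posPart_eq_zero.mpr (not_lt.mp h), sq, zero_mul]

theorem sPos_le_of_colorable (G : SimpleGraph V) {k : ℕ} (hG : G.Colorable k) :
    sPos G ≤ 2 * (numEdges G : ℝ) * ((k : ℝ) - 1) / (k : ℝ) := by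
  classical
  obtain rfl | hk := k.eq_zero_or_pos
  · have := G.colorable_zero_iff.mp hG
    simp [sPos]
  obtain ⟨c⟩ := hG
  have hA := adjHerm G
  set A := G.adjMatrix ℝ
  have hsame : ∀ u v, c u = c v → A⁺ u v = A⁻ u v := by
    intro u v h
    have hAuv : A u v = 0 := by
      simpa [A, adjMatrix_apply] using fun hadj => c.valid hadj h
    rw [← sub_eq_zero, ← Matrix.sub_apply, CFC.posPart_sub_negPart A hA.isSelfAdjoint, hAuv]
  have hAndoLin := (Matrix.nonneg_iff_posSemidef.mp (CFC.posPart_nonneg A)).sum_sq_apply_le_of_eq_on_sameFiber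
    c hsame (Matrix.sum_posPart_mul_negPart_apply A)
  have hsum : ∑ u, ∑ v, A⁺ u v ^ 2 + ∑ u, ∑ v, A⁻ u v ^ 2 = 2 * numEdges G := by
    rw [hA.sum_sq_posPart_apply_add_sum_sq_negPart_apply, sum_sq_adjMatrix_apply, numEdges]
  have hpos : ∑ u, ∑ v, A⁺ u v ^ 2 = sPos G := by
    rw [hA.sum_sq_posPart_apply, sPos_eq_sum_sq_posPart]
    rfl
  rw [Fintype.card_fin] at hAndoLin
  rw [le_div_iff₀ (by exact_mod_cast hk)]
  nlinarith

end SimpleGraph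

/-- Ando–Lin consequence: `s⁺(G) ≤ 2m(χ - 1)/χ`. -/
theorem sPos_le_of_chromaticNumber {n : ℕ} (G : SimpleGraph (Fin n)) (χ : ℕ)
    (hχ : G.chromaticNumber = χ) :
    sPos G ≤ 2 * (numEdges G : ℝ) * ((χ : ℝ) - 1) / (χ : ℝ) :=
  G.sPos_le_of_colorable (chromaticNumber_le_iff_colorable.mp hχ.le)
end

section
/- For any graph G with m edges, the spectral radius μ₁ of the adjacency matrix satisfies μ₁ ≤ (√(8m+1) − 1)/2. -/
open Finset SimpleGraph

/-!
If `A v = μ v` with `v ≠ 0`, then `μ² + μ` is an eigenvalue of the nonnegative matrix `A² + A`,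
so by Gershgorin it is at most a row sum of `A² + A`. The row of a vertex `k` sums to
`∑_{u ∼ k} d(u) + d(k)`, a partial sum of the degree sequence, hence at most `2m`.
Solving `μ² + μ ≤ 2m` for `μ` gives the bound.
-/

open Matrix

theorem Matrix.le_of_mulVec_eq_smul_of_row_sum_le {ι : Type*} [Fintype ι] [DecidableEq ι]
    {B : Matrix ι ι ℝ} {c μ : ℝ} (hB₀ : ∀ i j, 0 ≤ B i j) (hB : ∀ i, ∑ j, B i j ≤ c)
    {v : ι → ℝ} (hv : v ≠ 0) (hμ : B *ᵥ v = μ • v) : μ ≤ c := by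
  have hμ' : Module.End.HasEigenvalue (toLin' B) μ :=
    Module.End.hasEigenvalue_of_hasEigenvector
      ⟨Module.End.mem_eigenspace_iff.2 (by rwa [toLin'_apply]), hv⟩
  obtain ⟨k, hk⟩ := eigenvalue_mem_ball hμ'
  simp only [Metric.mem_closedBall, Real.dist_eq, Real.norm_eq_abs, abs_of_nonneg (hB₀ k _)] at hk
  linarith [hB k, le_abs_self (μ - B k k), add_sum_erase _ (B k) (mem_univ k)]

namespace SimpleGraph

variable {V : Type*} (G : SimpleGraph V) [DecidableRel G.Adj]

theorem adjMatrix_apply_nonneg {α : Type*} [Zero α] [One α] [Preorder α] [ZeroLEOneClass α]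
    (i j : V) : 0 ≤ G.adjMatrix α i j := by
  rw [adjMatrix_apply]
  split_ifs
  exacts [zero_le_one, le_rfl]

variable [Fintype V]

theorem sum_adjMatrix_apply (i : V) : ∑ j, G.adjMatrix ℝ i j = G.degree i := by
  simp [adjMatrix_apply, sum_boole, ← card_neighborFinset_eq_degree, neighborFinset_eq_filter]

theorem sum_adjMatrix_mul_self_add_adjMatrix_apply (i : V) :
    ∑ j, (G.adjMatrix ℝ * G.adjMatrix ℝ + G.adjMatrix ℝ) i j =
      ∑ u ∈ G.neighborFinset i, (G.degree u : ℝ) + G.degree i := by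
  simp only [Matrix.add_apply, sum_add_distrib, adjMatrix_mul_apply, sum_adjMatrix_apply]
  rw [sum_comm]
  simp only [sum_adjMatrix_apply]

variable [DecidableEq V]

theorem sum_degree_neighborFinset_add_degree_le (v : V) :
    ∑ u ∈ G.neighborFinset v, G.degree u + G.degree v ≤ 2 * #G.edgeFinset :=
  calc ∑ u ∈ G.neighborFinset v, G.degree u + G.degree v
      = ∑ u ∈ insert v (G.neighborFinset v), G.degree u := by
        rw [sum_insert (by simp), add_comm]
    _ ≤ ∑ u, G.degree u := sum_le_sum_of_subset (subset_univ _)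
    _ = 2 * #G.edgeFinset := G.sum_degrees_eq_twice_card_edges

theorem sq_add_le_two_mul_card_edgeFinset {μ : ℝ} {v : V → ℝ} (hv : v ≠ 0)
    (hμ : G.adjMatrix ℝ *ᵥ v = μ • v) : μ ^ 2 + μ ≤ 2 * #G.edgeFinset := by
  set A := G.adjMatrix ℝ
  have hB : (A * A + A) *ᵥ v = (μ ^ 2 + μ) • v := by
    rw [add_mulVec, ← mulVec_mulVec, hμ, mulVec_smul, hμ, smul_smul, ← add_smul, sq]
  have hB₀ (i j : V) : 0 ≤ (A * A + A) i j := by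
    rw [Matrix.add_apply, adjMatrix_mul_apply]
    exact add_nonneg (sum_nonneg fun u _ => G.adjMatrix_apply_nonneg u j)
      (G.adjMatrix_apply_nonneg i j)
  refine le_of_mulVec_eq_smul_of_row_sum_le hB₀ (fun i => ?_) hv hB
  rw [sum_adjMatrix_mul_self_add_adjMatrix_apply]
  exact_mod_cast G.sum_degree_neighborFinset_add_degree_le i

end SimpleGraph

theorem le_stanley_of_sq_add_le {x m : ℝ} (h : x ^ 2 + x ≤ 2 * m) :
    x ≤ (Real.sqrt (8 * m + 1) - 1) / 2 := by
  have : 2 * x + 1 ≤ Real.sqrt (8 * m + 1) :=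
    (le_abs_self _).trans (Real.abs_le_sqrt (by nlinarith))
  linarith

/-- Stanley's bound: `μ₁ ≤ (√(8m+1) - 1)/2`. -/
theorem specRad_le_stanley {n : ℕ} (G : SimpleGraph (Fin n)) :
    specRad G ≤ (Real.sqrt (8 * (numEdges G : ℝ) + 1) - 1) / 2 := by
  classical
  refine Real.iSup_le (fun i => le_stanley_of_sq_add_le ?_) ?_
  · have hv : ⇑((adjHerm G).eigenvectorBasis i) ≠ 0 := by
      simpa using (adjHerm G).eigenvectorBasis.orthonormal.ne_zero i
    exact G.sq_add_le_two_mul_card_edgeFinset hv ((adjHerm G).mulVec_eigenvectorBasis i)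
  · have : (1 : ℝ) ≤ Real.sqrt (8 * numEdges G + 1) :=
      Real.one_le_sqrt.2 (by linarith [(numEdges G).cast_nonneg (α := ℝ)])
    linarith
end

section
/- For any connected graph G with m edges and spectral radius μ, the Randić index satisfies R(G) ≥ m/μ. -/
open Finset SimpleGraph

/-! With `x = (√dᵢ)` and the sums running over ordered adjacent pairs `(i, j)`, Cauchy–Schwarz
gives `(2m)² ≤ (∑ 1/√(dᵢdⱼ)) · (∑ √(dᵢdⱼ)) = 2R · xᵀAx`, and the Rayleigh bound
`xᵀAx ≤ μ · xᵀx = 2mμ` turns this into `m ≤ Rμ`. -/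

open Matrix

theorem Finset.sq_card_le_sum_inv_mul_sum {ι : Type*} (s : Finset ι) {w : ι → ℝ}
    (hw : ∀ i ∈ s, 0 < w i) : (#s : ℝ) ^ 2 ≤ (∑ i ∈ s, (w i)⁻¹) * ∑ i ∈ s, w i := by
  simpa using sum_sq_le_sum_mul_sum_of_sq_le_mul s (r := 1)
    (fun i hi => (inv_pos.2 (hw i hi)).le) (fun i hi => (hw i hi).le)
    (fun i hi => by simp [inv_mul_cancel₀ (hw i hi).ne'])

open scoped ComplexOrder in
theorem Matrix.IsHermitian.posSemidef_smul_one_sub {𝕜 n : Type*} [RCLike 𝕜] [Fintype n]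
    [DecidableEq n] {A : Matrix n n 𝕜} (hA : A.IsHermitian) {c : ℝ}
    (hc : ∀ i, hA.eigenvalues i ≤ c) : ((c : 𝕜) • 1 - A).PosSemidef := by
  set U : unitaryGroup n 𝕜 := hA.eigenvectorUnitary
  have hdiag : diagonal (fun i => ((c - hA.eigenvalues i : ℝ) : 𝕜)) =
      (c : 𝕜) • 1 - diagonal (RCLike.ofReal ∘ hA.eigenvalues) := by
    ext i j
    by_cases h : i = j <;> simp [h, Algebra.algebraMap_eq_smul_one, sub_smul]
  have hconj : (c : 𝕜) • 1 - A = (U : Matrix n n 𝕜) *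
      diagonal (fun i => ((c - hA.eigenvalues i : ℝ) : 𝕜)) * (U : Matrix n n 𝕜)ᴴ := by
    rw [hdiag, mul_sub, sub_mul, mul_smul_comm, mul_one, smul_mul_assoc, ← star_eq_conjTranspose,
      Unitary.mul_star_self_of_mem U.2]
    exact congrArg _ hA.spectral_theorem
  rw [hconj]
  refine (PosSemidef.diagonal fun i => ?_).mul_mul_conjTranspose_same _
  simpa using hc i

theorem Matrix.IsHermitian.dotProduct_mulVec_le {n : Type*} [Fintype n] [DecidableEq n]
    {A : Matrix n n ℝ} (hA : A.IsHermitian) {c : ℝ} (hc : ∀ i, hA.eigenvalues i ≤ c)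
    (x : n → ℝ) : x ⬝ᵥ (A *ᵥ x) ≤ c * (x ⬝ᵥ x) := by
  have := (hA.posSemidef_smul_one_sub hc).dotProduct_mulVec_nonneg x
  simp only [star_trivial, sub_mulVec, smul_mulVec, one_mulVec, dotProduct_sub,
    dotProduct_smul, RCLike.ofReal_real_eq_id, id, smul_eq_mul] at this
  linarith

theorem randic_nonneg {V : Type*} [Fintype V] (G : SimpleGraph V) : 0 ≤ randic G := by
  unfold randic
  positivity

section
variable {V : Type*} [Fintype V] (G : SimpleGraph V) [DecidableRel G.Adj]

theorem SimpleGraph.sum_filter_adj {M : Type*} [AddCommMonoid M] (f : V × V → M) :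
    ∑ p ∈ univ.filter (fun (x, y) ↦ G.Adj x y), f p = ∑ i, ∑ j ∈ G.neighborFinset i, f (i, j) := by
  rw [sum_filter, ← univ_product_univ, sum_product]
  simp [neighborFinset_eq_filter, sum_filter]

theorem SimpleGraph.dotProduct_adjMatrix_mulVec {α : Type*} [CommSemiring α] (x : V → α) :
    x ⬝ᵥ (G.adjMatrix α *ᵥ x) = ∑ p ∈ univ.filter (fun (x, y) ↦ G.Adj x y), x p.1 * x p.2 := by
  simp [dotProduct, adjMatrix_mulVec_apply, mul_sum, sum_filter_adj]

theorem two_mul_randic :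
    2 * randic G = ∑ p ∈ univ.filter (fun (x, y) ↦ G.Adj x y),
      (√((G.degree p.1 : ℝ) * G.degree p.2))⁻¹ := by
  rw [randic, ← mul_assoc, mul_one_div_cancel two_ne_zero, one_mul, sum_filter_adj]
  simp only [neighborFinset_eq_filter, sum_filter, one_div]
  congr!

theorem SimpleGraph.sum_sqrt_degree_mul_le [DecidableEq V] (hA : (G.adjMatrix ℝ).IsHermitian)
    {c : ℝ} (hc : ∀ i, hA.eigenvalues i ≤ c) :
    ∑ p ∈ univ.filter (fun (x, y) ↦ G.Adj x y), √((G.degree p.1 : ℝ) * G.degree p.2) ≤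
      c * (2 * #G.edgeFinset) := by
  set x : V → ℝ := fun i => √(G.degree i : ℝ)
  have hxx : x ⬝ᵥ x = 2 * #G.edgeFinset := by
    simp only [dotProduct, x, Real.mul_self_sqrt (Nat.cast_nonneg _)]
    exact_mod_cast G.sum_degrees_eq_twice_card_edges
  have hquad := hA.dotProduct_mulVec_le hc x
  rw [hxx, dotProduct_adjMatrix_mulVec] at hquad
  simpa only [x, ← Real.sqrt_mul (Nat.cast_nonneg _)] using hquad

theorem card_edgeFinset_le_randic_mul [DecidableEq V] (hA : (G.adjMatrix ℝ).IsHermitian)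
    {c : ℝ} (hc : ∀ i, hA.eigenvalues i ≤ c) (hc₀ : 0 ≤ c) :
    (#G.edgeFinset : ℝ) ≤ randic G * c := by
  have hcs := (univ.filter (fun (x, y) ↦ G.Adj x y)).sq_card_le_sum_inv_mul_sum
    (w := fun p => √((G.degree p.1 : ℝ) * G.degree p.2)) fun p hp => by
      have hadj : G.Adj p.1 p.2 := (mem_filter.1 hp).2
      have := hadj.degree_pos_left
      have := hadj.degree_pos_right
      positivity
  rw [← two_mul_card_edgeFinset, ← two_mul_randic, Nat.cast_mul, Nat.cast_two] at hcs
  have hsq : (2 * #G.edgeFinset : ℝ) ^ 2 ≤ 2 * randic G * (c * (2 * #G.edgeFinset)) :=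
    hcs.trans (mul_le_mul_of_nonneg_left (G.sum_sqrt_degree_mul_le hA hc)
      (by linarith [randic_nonneg G]))
  nlinarith [mul_nonneg (randic_nonneg G) hc₀]
end

theorem adjEig_le_specRad {V : Type*} [Fintype V] [DecidableEq V] (G : SimpleGraph V) (i : V) :
    adjEig G i ≤ specRad G :=
  le_ciSup (Set.finite_range _).bddAbove i

theorem randic_ge_edges_div_specRad_general {n : ℕ} (G : SimpleGraph (Fin n)) :
    randic G ≥ (numEdges G : ℝ) / specRad G := by
  classical
  rcases le_or_gt (specRad G) 0 with hμ | hμ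
  · exact (div_nonpos_of_nonneg_of_nonpos (Nat.cast_nonneg _) hμ).trans (randic_nonneg G)
  rw [ge_iff_le, div_le_iff₀ hμ]
  exact card_edgeFinset_le_randic_mul G (adjHerm G) (adjEig_le_specRad G) hμ.le

/-- Favaron–Mahéo–Saclé: for connected `G`, `R(G) ≥ m/μ`. -/
theorem randic_ge_edges_div_specRad {n : ℕ} (G : SimpleGraph (Fin n))
    (hG : G.Connected) : randic G ≥ (numEdges G : ℝ) / specRad G :=
  randic_ge_edges_div_specRad_general G
end

section
/- For any connected graph G, √(s⁻(G)) ≤ R(G), where s⁻ is the sum of squares of the negative adjacency eigenvalues and R is the Randić index. -/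
/-!
The largest adjacency eigenvalue `μ` is nonnegative (the eigenvalues sum to `tr A = 0`) and is
one of the eigenvalues whose squares sum to `tr A² = 2m`, so `s⁻ + μ² ≤ 2m`. Cauchy–Schwarz over
ordered adjacent pairs gives `(2m)² ≤ (∑ √(dᵢdⱼ)) · 2R`, and the Rayleigh bound for the vector
`(√dᵢ)` gives `∑ √(dᵢdⱼ) ≤ 2mμ`; hence `m ≤ μR` (Favaron–Mahéo–Saclé). Therefore
`s⁻ ≤ 2μR - μ² ≤ R²`.
-/

open Finset SimpleGraph

open Matrix

namespace Matrix.IsHermitian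

variable {n : Type*} [Fintype n] [DecidableEq n]

theorem trace_pow_eq_sum_eigenvalues_pow {𝕜 : Type*} [RCLike 𝕜] {A : Matrix n n 𝕜}
    (hA : A.IsHermitian) (k : ℕ) : (A ^ k).trace = ∑ i, (hA.eigenvalues i : 𝕜) ^ k := by
  conv_lhs => rw [hA.spectral_theorem, ← map_pow, Unitary.conjStarAlgAut_apply, trace_mul_cycle,
    Unitary.coe_star_mul_self, one_mul, diagonal_pow, trace_diagonal]
  rfl

theorem dotProduct_mulVec_le_of_eigenvalues_le {A : Matrix n n ℝ} (hA : A.IsHermitian)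
    (x : n → ℝ) {μ : ℝ} (hμ : ∀ i, hA.eigenvalues i ≤ μ) : x ⬝ᵥ A *ᵥ x ≤ μ * (x ⬝ᵥ x) := by
  set U := (hA.eigenvectorUnitary : Matrix n n ℝ)
  set y := x ᵥ* U
  have hstar : star U *ᵥ x = y := by
    rw [star_eq_conjTranspose, conjTranspose_eq_transpose_of_trivial, mulVec_transpose]
  have hquad : x ⬝ᵥ A *ᵥ x = ∑ i, hA.eigenvalues i * y i ^ 2 := by
    conv_lhs => rw [hA.spectral_theorem, Unitary.conjStarAlgAut_apply, ← mulVec_mulVec,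
      ← mulVec_mulVec, dotProduct_mulVec, hstar]
    simp only [dotProduct, mulVec_diagonal, Function.comp_apply, RCLike.ofReal_real_eq_id, id]
    exact Finset.sum_congr rfl fun i _ => by ring
  have hnorm : x ⬝ᵥ x = ∑ i, y i ^ 2 := by
    have hx : U *ᵥ y = x := by
      rw [← hstar, mulVec_mulVec, mem_unitaryGroup_iff.mp hA.eigenvectorUnitary.2, one_mulVec]
    calc x ⬝ᵥ x = x ⬝ᵥ U *ᵥ y := by rw [hx]
      _ = y ⬝ᵥ y := dotProduct_mulVec x U y
      _ = ∑ i, y i ^ 2 := by simp only [dotProduct, sq]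
  rw [hquad, hnorm, Finset.mul_sum]
  exact Finset.sum_le_sum fun i _ => mul_le_mul_of_nonneg_right (hμ i) (sq_nonneg _)

end Matrix.IsHermitian

theorem Finset.card_sq_le_sum_mul_sum_one_div {ι : Type*} (s : Finset ι) {w : ι → ℝ}
    (hw : ∀ i ∈ s, 0 < w i) : (#s : ℝ) ^ 2 ≤ (∑ i ∈ s, w i) * ∑ i ∈ s, 1 / w i := by
  rcases s.eq_empty_or_nonempty with rfl | hs
  · simp
  have titu := sq_sum_div_le_sum_sq_div s 1 hw
  simp only [Pi.one_apply, one_pow, sum_const, nsmul_eq_mul, mul_one] at titu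
  rwa [div_le_iff₀ (sum_pos hw hs), mul_comm] at titu

theorem sum_ite_neg_sq_add_sq_le {ι : Type*} [Fintype ι] (f : ι → ℝ) {i : ι} (hi : 0 ≤ f i) :
    (∑ j, if f j < 0 then f j ^ 2 else 0) + f i ^ 2 ≤ ∑ j, f j ^ 2 := by
  classical
  calc (∑ j, if f j < 0 then f j ^ 2 else 0) + f i ^ 2
      = ∑ j, ((if f j < 0 then f j ^ 2 else 0) + if j = i then f j ^ 2 else 0) := by
        rw [sum_add_distrib, sum_ite_eq']; simp
    _ ≤ ∑ j, f j ^ 2 := sum_le_sum fun j _ => by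
        split_ifs with hneg hji hji
        · exact absurd (hji ▸ hneg) hi.not_gt
        · simp
        · simp
        · simp [sq_nonneg]

namespace SimpleGraph

open scoped Classical

variable {V : Type*} [Fintype V] (G : SimpleGraph V)

theorem dotProduct_adjMatrix_mulVec_s9 (x : V → ℝ) :
    x ⬝ᵥ G.adjMatrix ℝ *ᵥ x = ∑ i, ∑ j, if G.Adj i j then x i * x j else 0 := by
  simp [dotProduct, mul_sum, neighborFinset_eq_filter, sum_filter]

theorem sum_sum_ite_adj_eq_sum_filter (f : V → V → ℝ) :
    ∑ i, ∑ j, (if G.Adj i j then f i j else 0) =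
      ∑ p ∈ univ.filter (fun p : V × V => G.Adj p.1 p.2), f p.1 p.2 := by
  rw [sum_filter, Fintype.sum_prod_type]

theorem sum_sum_ite_adj_one : ∑ i, ∑ j, (if G.Adj i j then (1 : ℝ) else 0) = 2 * numEdges G := by
  simp [sum_boole, ← neighborFinset_eq_filter, numEdges, ← Nat.cast_sum,
    sum_degrees_eq_twice_card_edges]

theorem randic_nonneg : 0 ≤ randic G := by
  unfold randic
  positivity

variable [DecidableEq V]

theorem sum_adjEig_eq_zero : ∑ i, adjEig G i = 0 := by
  simpa [adjEig, trace_adjMatrix] using ((adjHerm G).trace_eq_sum_eigenvalues).symm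

theorem sum_adjEig_sq : ∑ i, adjEig G i ^ 2 = 2 * numEdges G := by
  have h := (adjHerm G).trace_pow_eq_sum_eigenvalues_pow 2
  rw [sq, trace] at h
  simp only [diag_apply, adjMatrix_mul_self_apply_self] at h
  simpa [adjEig, numEdges, ← Nat.cast_sum, sum_degrees_eq_twice_card_edges] using h.symm

theorem adjEig_le_specRad (i : V) : adjEig G i ≤ specRad G :=
  le_ciSup (Set.finite_range _).bddAbove i

theorem specRad_nonneg : 0 ≤ specRad G := by
  rcases isEmpty_or_nonempty V with hV | hV
  · simp [specRad]
  obtain ⟨i, -, hi⟩ := exists_le_of_sum_le (f := 0) univ_nonempty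
    (by simp [sum_adjEig_eq_zero G] : ∑ i, (0 : V → ℝ) i ≤ ∑ i, adjEig G i)
  exact hi.trans (adjEig_le_specRad G i)

theorem sNeg_add_specRad_sq_le : sNeg G + specRad G ^ 2 ≤ 2 * numEdges G := by
  rcases isEmpty_or_nonempty V with hV | hV
  · simp [sNeg, specRad]
  obtain ⟨i, hi⟩ : ∃ i, adjEig G i = specRad G := exists_eq_ciSup_of_finite
  rw [← sum_adjEig_sq, ← hi]
  exact sum_ite_neg_sq_add_sq_le _ (hi ▸ specRad_nonneg G)

theorem sum_adj_sqrt_degree_mul_le :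
    ∑ i, ∑ j, (if G.Adj i j then √((G.degree i : ℝ) * G.degree j) else 0) ≤
      specRad G * (2 * numEdges G) := by
  set x : V → ℝ := fun i => √(G.degree i)
  have hquad : x ⬝ᵥ G.adjMatrix ℝ *ᵥ x =
      ∑ i, ∑ j, (if G.Adj i j then √((G.degree i : ℝ) * G.degree j) else 0) := by
    simp only [dotProduct_adjMatrix_mulVec_s9, x, Real.sqrt_mul (Nat.cast_nonneg _)]
  have hnorm : x ⬝ᵥ x = 2 * numEdges G := by
    simp [dotProduct, x, numEdges, ← Nat.cast_sum, sum_degrees_eq_twice_card_edges]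
  rw [← hquad, ← hnorm]
  exact (adjHerm G).dotProduct_mulVec_le_of_eigenvalues_le x (adjEig_le_specRad G)

theorem numEdges_le_specRad_mul_randic : (numEdges G : ℝ) ≤ specRad G * randic G := by
  set s := univ.filter (fun p : V × V => G.Adj p.1 p.2)
  set w : V × V → ℝ := fun p => √((G.degree p.1 : ℝ) * G.degree p.2)
  have hw : ∀ p ∈ s, 0 < w p := fun p hp => by
    have hadj : G.Adj p.1 p.2 := (mem_filter.mp hp).2
    have h1 : 0 < G.degree p.1 := (G.degree_pos_iff_exists_adj _).mpr ⟨_, hadj⟩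
    have h2 : 0 < G.degree p.2 := (G.degree_pos_iff_exists_adj _).mpr ⟨_, hadj.symm⟩
    positivity
  have hcard : (#s : ℝ) = 2 * numEdges G := by
    rw [← sum_sum_ite_adj_one, sum_sum_ite_adj_eq_sum_filter, card_eq_sum_ones, Nat.cast_sum,
      Nat.cast_one]
  have hrandic : randic G = 1 / 2 * ∑ p ∈ s, 1 / w p := by
    rw [randic, sum_sum_ite_adj_eq_sum_filter]
  have hrayleigh : ∑ p ∈ s, w p ≤ specRad G * (2 * numEdges G) := by
    simpa only [sum_sum_ite_adj_eq_sum_filter] using sum_adj_sqrt_degree_mul_le G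
  have hinv : 0 ≤ ∑ p ∈ s, 1 / w p := sum_nonneg fun p hp => (one_div_pos.mpr (hw p hp)).le
  have hcs : (2 * numEdges G : ℝ) ^ 2 ≤ specRad G * (2 * numEdges G) * ∑ p ∈ s, 1 / w p :=
    calc (2 * numEdges G : ℝ) ^ 2 = (#s : ℝ) ^ 2 := by rw [hcard]
      _ ≤ (∑ p ∈ s, w p) * ∑ p ∈ s, 1 / w p := s.card_sq_le_sum_mul_sum_one_div hw
      _ ≤ _ := by gcongr
  rw [hrandic]
  rcases (Nat.cast_nonneg (numEdges G) : (0 : ℝ) ≤ _).eq_or_lt with hm | hm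
  · rw [← hm]
    exact mul_nonneg (specRad_nonneg G) (by positivity)
  · nlinarith

end SimpleGraph

theorem sqrt_sNeg_le_randic_general {n : ℕ} (G : SimpleGraph (Fin n)) :
    Real.sqrt (sNeg G) ≤ randic G := by
  have hspec := G.sNeg_add_specRad_sq_le
  have hfms := G.numEdges_le_specRad_mul_randic
  rw [Real.sqrt_le_left G.randic_nonneg]
  nlinarith [sq_nonneg (randic G - specRad G)]

/-- for connected `G`, `√(s⁻(G)) ≤ R(G)`. -/
theorem sqrt_sNeg_le_randic {n : ℕ} (G : SimpleGraph (Fin n))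
    (hG : G.Connected) : Real.sqrt (sNeg G) ≤ randic G :=
  sqrt_sNeg_le_randic_general G
end

section
/- For any connected bipartite graph G, √(s⁺(G)) ≤ R(G), where R is the Randić index. -/
/-!
A proper 2-colouring gives a diagonal `±1` matrix `D` with `D A D = -A`, so the adjacency
spectrum of a bipartite graph is symmetric about `0` and `s⁺ = s⁻`; since `s⁺ + s⁻ = tr A² = 2m`,
this gives `s⁺ = m`. On the other side, Hölder's inequality over the `2m` ordered adjacent pairs
gives `(2m)³ ≤ (2R)² · ∑ dᵢdⱼ`, and in a triangle-free graph the neighbours of a vertex have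
pairwise disjoint sets of incident edges, so `∑_{j ∼ i} dⱼ ≤ m` and `∑ dᵢdⱼ ≤ 2m²`. Hence `R ≥ √m`.
-/

open Finset SimpleGraph

open Matrix Polynomial

lemma card_pow_three_le_sq_sum_one_div_sqrt_mul_sum {ι : Type*} (s : Finset ι) (w : ι → ℝ)
    (hw : ∀ i ∈ s, 0 < w i) :
    (#s : ℝ) ^ 3 ≤ (∑ i ∈ s, 1 / √(w i)) ^ 2 * ∑ i ∈ s, w i := by
  rcases s.eq_empty_or_nonempty with rfl | hs
  · simp
  set S := ∑ i ∈ s, √(w i)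
  set T := ∑ i ∈ s, 1 / √(w i)
  have hST : (#s : ℝ) ^ 2 ≤ S * T := by
    have := sum_mul_sq_le_sq_mul_sq s (fun i => √√(w i)) (fun i => 1 / √√(w i))
    rw [sum_congr rfl fun i hi => mul_one_div_cancel (by have := hw i hi; positivity)] at this
    simpa only [sum_const, nsmul_one, div_pow, one_pow, Real.sq_sqrt, Real.sqrt_nonneg] using this
  have hS : S ^ 2 ≤ #s * ∑ i ∈ s, w i := by
    have := sum_mul_sq_le_sq_mul_sq s (fun _ => (1 : ℝ)) (fun i => √(w i))
    simpa [sum_congr rfl fun i hi => Real.sq_sqrt (hw i hi).le, S] using this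
  have hN : (0 : ℝ) < #s := by exact_mod_cast hs.card_pos
  have : (#s : ℝ) * #s ^ 3 ≤ #s * (T ^ 2 * ∑ i ∈ s, w i) := calc
    (#s : ℝ) * #s ^ 3 = (#s ^ 2) ^ 2 := by ring
    _ ≤ (S * T) ^ 2 := pow_le_pow_left₀ (by positivity) hST 2
    _ = S ^ 2 * T ^ 2 := by ring
    _ ≤ (#s * ∑ i ∈ s, w i) * T ^ 2 := mul_le_mul_of_nonneg_right hS (sq_nonneg T)
    _ = #s * (T ^ 2 * ∑ i ∈ s, w i) := by ring
  exact le_of_mul_le_mul_left this hN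

namespace Matrix.IsHermitian

variable {n : Type*} [Fintype n] [DecidableEq n] {A : Matrix n n ℝ}

lemma trace_cfc_s12 (hA : A.IsHermitian) (f : ℝ → ℝ) :
    (cfc f A).trace = ∑ i, f (hA.eigenvalues i) := by
  rw [cfc_eq hA, IsHermitian.cfc, Unitary.conjStarAlgAut_apply, trace_mul_cycle,
    Unitary.coe_star_mul_self, one_mul, trace_diagonal]
  rfl

lemma trace_mul_self (hA : A.IsHermitian) : (A * A).trace = ∑ i, hA.eigenvalues i ^ 2 := by
  rw [← sq, ← cfc_pow_id (R := ℝ) A 2 hA.isSelfAdjoint, hA.trace_cfc_s12]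

lemma map_neg_eigenvalues_eq_of_charpoly_neg_eq (hA : A.IsHermitian)
    (h : (-A).charpoly = A.charpoly) :
    univ.val.map (fun i => -hA.eigenvalues i) = univ.val.map hA.eigenvalues := by
  have hneg := hA.charpoly_cfc_eq (fun x => -x)
  rw [cfc_neg_id A hA.isSelfAdjoint, h] at hneg
  have := congrArg Polynomial.roots hneg
  rw [hA.roots_charpoly_eq_eigenvalues,
    roots_prod _ _ (prod_ne_zero_iff.2 fun i _ => X_sub_C_ne_zero _)] at this
  simpa using this.symm

end Matrix.IsHermitian

namespace SimpleGraph

variable {V : Type*} [Fintype V] {G : SimpleGraph V}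

lemma Coloring.charpoly_neg_adjMatrix [DecidableEq V] [DecidableRel G.Adj]
    (c : G.Coloring (Fin 2)) : (-G.adjMatrix ℝ).charpoly = (G.adjMatrix ℝ).charpoly := by
  set D : Matrix V V ℝ := diagonal fun v => if c v = 0 then 1 else -1
  have hsign : ∀ a b : Fin 2,
      ((if a = 0 then 1 else -1) * if b = 0 then 1 else -1 : ℝ) = if a = b then 1 else -1 := by
    intro a b; fin_cases a <;> fin_cases b <;> norm_num
  have hD : D * D = 1 := by
    rw [diagonal_mul_diagonal, ← diagonal_one]
    simp only [hsign, if_true]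
  have hconj : D * G.adjMatrix ℝ * D = -G.adjMatrix ℝ := by
    ext v w
    rw [mul_diagonal, diagonal_mul, mul_right_comm, hsign]
    by_cases h : G.Adj v w
    · simp [h, c.valid h]
    · simp [h]
  rw [← hconj, mul_assoc, charpoly_mul_comm, mul_assoc, hD, mul_one]

lemma sPos_eq_sNeg_of_colorable_two [DecidableEq V] (hb : G.Colorable 2) : sPos G = sNeg G := by
  classical
  obtain ⟨c⟩ := hb
  have hsymm : univ.val.map (fun i => -adjEig G i) = univ.val.map (adjEig G) :=
    (adjHerm G).map_neg_eigenvalues_eq_of_charpoly_neg_eq c.charpoly_neg_adjMatrix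
  have hsum := congrArg (fun s => (s.map fun x => if 0 < x then x ^ 2 else 0).sum) hsymm
  simp only [Multiset.map_map, Function.comp_def, neg_pos, even_two.neg_pow] at hsum
  rw [sPos, sNeg, sum_eq_multiset_sum, sum_eq_multiset_sum]
  exact hsum.symm

lemma sPos_add_sNeg [DecidableEq V] : sPos G + sNeg G = 2 * numEdges G := by
  classical
  calc sPos G + sNeg G = ∑ v, adjEig G v ^ 2 := by
        rw [sPos, sNeg, ← sum_add_distrib]
        refine sum_congr rfl fun v _ => ?_
        rcases lt_trichotomy (adjEig G v) 0 with h | h | h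
        · simp [h, h.not_gt]
        · simp [h]
        · simp [h, h.not_gt]
    _ = (G.adjMatrix ℝ * G.adjMatrix ℝ).trace := (adjHerm G).trace_mul_self.symm
    _ = ∑ v, (G.degree v : ℝ) := by
        simp only [Matrix.trace, Matrix.diag, adjMatrix_mul_self_apply_self]
    _ = 2 * numEdges G := by
        rw [numEdges]
        exact_mod_cast sum_degrees_eq_twice_card_edges G

lemma sPos_eq_numEdges_of_colorable_two [DecidableEq V] (hb : G.Colorable 2) :
    sPos G = numEdges G := by
  linarith [sPos_add_sNeg (G := G), sPos_eq_sNeg_of_colorable_two hb]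

lemma sum_degree_neighborFinset_le_card_edgeFinset [DecidableEq V] [DecidableRel G.Adj]
    (hG : G.CliqueFree 3) (v : V) : ∑ w ∈ G.neighborFinset v, G.degree w ≤ #G.edgeFinset := by
  simp_rw [← card_incidenceFinset_eq_degree]
  rw [← card_biUnion]
  · exact card_le_card (biUnion_subset.2 fun w _ => G.incidenceFinset_subset w)
  · intro w hw w' hw' hne
    have hnadj : ¬ G.Adj w w' := fun h => hG {v, w, w'} <|
      is3Clique_triple_iff.2 ⟨(G.mem_neighborFinset _ _).1 hw, (G.mem_neighborFinset _ _).1 hw', h⟩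
    simp only [incidenceFinset, Function.onFun, Set.disjoint_toFinset,
      Set.disjoint_iff_inter_eq_empty]
    exact G.incidenceSet_inter_incidenceSet_of_not_adj hnadj hne

lemma sum_filter_adj_eq_sum_neighborFinset [DecidableRel G.Adj] {M : Type*} [AddCommMonoid M]
    (f : V → V → M) :
    ∑ p ∈ univ.filter (fun p : V × V => G.Adj p.1 p.2), f p.1 p.2
      = ∑ v, ∑ w ∈ G.neighborFinset v, f v w := by
  simp_rw [neighborFinset_eq_filter, sum_filter, Fintype.sum_prod_type]

lemma card_filter_adj [DecidableEq V] [DecidableRel G.Adj] :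
    #(univ.filter fun p : V × V => G.Adj p.1 p.2) = 2 * #G.edgeFinset := by
  rw [card_eq_sum_ones, sum_filter_adj_eq_sum_neighborFinset (fun _ _ => 1),
    ← sum_degrees_eq_twice_card_edges]
  simp

lemma sum_filter_adj_degree_mul_degree_le [DecidableEq V] [DecidableRel G.Adj]
    (hG : G.CliqueFree 3) :
    ∑ p ∈ univ.filter (fun p : V × V => G.Adj p.1 p.2), G.degree p.1 * G.degree p.2
      ≤ 2 * #G.edgeFinset ^ 2 := by
  rw [sum_filter_adj_eq_sum_neighborFinset fun v w => G.degree v * G.degree w]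
  calc ∑ v, ∑ w ∈ G.neighborFinset v, G.degree v * G.degree w
      ≤ ∑ v, G.degree v * #G.edgeFinset := sum_le_sum fun v _ => by
        rw [← mul_sum]
        exact Nat.mul_le_mul_left _ (sum_degree_neighborFinset_le_card_edgeFinset hG v)
    _ = 2 * #G.edgeFinset ^ 2 := by rw [← sum_mul, sum_degrees_eq_twice_card_edges]; ring

lemma sqrt_numEdges_le_randic (hG : G.CliqueFree 3) : √(numEdges G : ℝ) ≤ randic G := by
  classical
  set s := univ.filter fun p : V × V => G.Adj p.1 p.2
  set m : ℝ := (numEdges G : ℝ)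
  set P := ∑ p ∈ s, (G.degree p.1 : ℝ) * G.degree p.2
  set T := ∑ p ∈ s, 1 / √((G.degree p.1 : ℝ) * G.degree p.2)
  have hrandic : randic G = T / 2 := by
    simp only [randic, T, s, sum_filter, Fintype.sum_prod_type]
    ring
  have hcard : (#s : ℝ) = 2 * m := by
    have h := card_filter_adj (G := G)
    simp only [s, m, numEdges]
    exact_mod_cast h
  have hP : P ≤ 2 * m ^ 2 := by
    simp only [P, m, numEdges]; exact_mod_cast sum_filter_adj_degree_mul_degree_le hG
  have hpos : ∀ p ∈ s, (0 : ℝ) < G.degree p.1 * G.degree p.2 := fun p hp => by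
    have hadj := (mem_filter.1 hp).2
    have := (G.degree_pos_iff_exists_adj p.1).2 ⟨_, hadj⟩
    have := (G.degree_pos_iff_exists_adj p.2).2 ⟨_, hadj.symm⟩
    positivity
  have hholder : (#s : ℝ) ^ 3 ≤ T ^ 2 * P :=
    card_pow_three_le_sq_sum_one_div_sqrt_mul_sum s _ hpos
  rw [hrandic, Real.sqrt_le_iff]
  refine ⟨by positivity, ?_⟩
  rcases (show (0 : ℝ) ≤ m by positivity).eq_or_lt with hm | hm
  · rw [← hm]; positivity
  · rw [hcard] at hholder
    have hm2 : m ^ 2 * (4 * m) ≤ m ^ 2 * T ^ 2 := by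
      nlinarith [mul_le_mul_of_nonneg_left hP (sq_nonneg T)]
    have h4m : 4 * m ≤ T ^ 2 := le_of_mul_le_mul_left hm2 (by positivity)
    linarith [show (T / 2) ^ 2 = T ^ 2 / 4 by ring]

end SimpleGraph

theorem sqrt_sPos_le_randic_of_bipartite_general {n : ℕ} (G : SimpleGraph (Fin n))
    (hb : G.Colorable 2) :
    Real.sqrt (sPos G) ≤ randic G := by
  rw [sPos_eq_numEdges_of_colorable_two hb]
  exact sqrt_numEdges_le_randic (hb.cliqueFree (by norm_num))

/-- for a connected bipartite graph, `√(s⁺(G)) ≤ R(G)`. -/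
theorem sqrt_sPos_le_randic_of_bipartite {n : ℕ} (G : SimpleGraph (Fin n))
    (hG : G.Connected) (hb : G.Colorable 2) :
    Real.sqrt (sPos G) ≤ randic G :=
  sqrt_sPos_le_randic_of_bipartite_general G hb
end
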